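/- (Hedge/MW deterministic regret bound) Consider the multiplicative weights algorithm over K actions with learning rate η > 0: weights start uniform, w₁(a) = 1/K, and are updated by w_{t+1}(a) ∝ w_t(a)·exp(−η·(1 − r_t(a))) where r_t : {1,…,K} → [0,1] is the reward vector at round t. Then for any fixed action a*, ∑_{t=1}^T ⟨w_t, r_t⟩ ≥ ∑_{t=1}^T r_t(a*) − (log K)/η − η·T/8, where ⟨w_t, r_t⟩ = ∑_a w_t(a) r_t(a). -/

import Mathlib

/-!
With losses `ℓ_t = 1 - r_t` and cumulative losses `L_t`, the Hedge weights are the normalised terms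
of the potential `Φ_t = ∑_a exp (-η L_t(a))`. Each round, `log (Φ_{t+1} / Φ_t)` is the
log-moment-generating function at `-η` of the loss under `w_t`, which Hoeffding's lemma bounds by
`-η ⟨w_t, ℓ_t⟩ + η²/8`. Telescoping from `Φ_0 = K`, and bounding `Φ_T` below by the comparator's
single term `exp (-η L_T(a*))`, gives `η (∑_t ⟨w_t, ℓ_t⟩ - L_T(a*)) ≤ log K + T η²/8`.
-/

open Finset Real ProbabilityTheory MeasureTheory

theorem log_sum_mul_exp_le {ι : Type*} [Fintype ι] {p x : ι → ℝ} {a b : ℝ}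
    (hp : ∀ i, 0 ≤ p i) (hp1 : ∑ i, p i = 1) (hx : ∀ i, x i ∈ Set.Icc a b) (s : ℝ) :
    log (∑ i, p i * exp (s * x i)) ≤ s * ∑ i, p i * x i + (b - a) ^ 2 * s ^ 2 / 8 := by
  let : MeasurableSpace ι := ⊤
  have hq : ∑ i, ENNReal.ofReal (p i) = 1 := by
    rw [← ENNReal.ofReal_sum_of_nonneg fun i _ => hp i, hp1, ENNReal.ofReal_one]
  set μ := (PMF.ofFintype _ hq).toMeasure
  have hμ (f : ι → ℝ) : ∫ i, f i ∂μ = ∑ i, p i * f i := by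
    simp [μ, PMF.integral_eq_sum, ENNReal.toReal_ofReal (hp _)]
  have hoeffding := (hasSubgaussianMGF_of_mem_Icc (μ := μ) (X := x)
    (measurable_of_countable x).aemeasurable (ae_of_all _ hx)).mgf_le s
  simp only [mgf, hμ] at hoeffding
  set m := ∑ i, p i * x i
  have hfactor : ∑ i, p i * exp (s * (x i - m)) = exp (-(s * m)) * ∑ i, p i * exp (s * x i) := by
    rw [mul_sum]
    refine sum_congr rfl fun i _ => ?_
    rw [mul_sub, sub_eq_neg_add, exp_add]
    ring
  have hpos : 0 < ∑ i, p i * exp (s * x i) := by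
    obtain ⟨j, -, hj⟩ := exists_lt_of_sum_lt (by simp [hp1] : ∑ i : ι, (0 : ℝ) < ∑ i, p i)
    exact sum_pos' (fun i _ => by have := hp i; positivity) ⟨j, mem_univ j, by positivity⟩
  have hvar : (((‖b - a‖₊ / 2) ^ 2 : NNReal) : ℝ) = (b - a) ^ 2 / 4 := by
    norm_num [div_pow]
  rw [hfactor, hvar, ← log_le_iff_le_exp (by positivity), log_mul (exp_ne_zero _) hpos.ne',
    log_exp] at hoeffding
  linarith

section Hedge

variable {ι : Type*} [Fintype ι] (η : ℝ) (ℓ : ℕ → ι → ℝ)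

noncomputable def hedgePotential (t : ℕ) : ℝ :=
  ∑ a, exp (-η * ∑ i ∈ range t, ℓ i a)

noncomputable def hedgeWeights (t : ℕ) (a : ι) : ℝ :=
  exp (-η * ∑ i ∈ range t, ℓ i a) / hedgePotential η ℓ t

lemma hedgePotential_pos [Nonempty ι] (t : ℕ) : 0 < hedgePotential η ℓ t :=
  sum_pos (fun _ _ => exp_pos _) univ_nonempty

lemma hedgePotential_zero : hedgePotential η ℓ 0 = Fintype.card ι := by
  simp [hedgePotential]

lemma hedgeWeights_nonneg (t : ℕ) (a : ι) : 0 ≤ hedgeWeights η ℓ t a :=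
  div_nonneg (exp_pos _).le (sum_nonneg fun _ _ => (exp_pos _).le)

lemma sum_hedgeWeights [Nonempty ι] (t : ℕ) : ∑ a, hedgeWeights η ℓ t a = 1 := by
  simp only [hedgeWeights, ← sum_div]
  exact div_self (hedgePotential_pos η ℓ t).ne'

lemma sum_hedgeWeights_mul_exp [Nonempty ι] (t : ℕ) :
    ∑ a, hedgeWeights η ℓ t a * exp (-η * ℓ t a) =
      hedgePotential η ℓ (t + 1) / hedgePotential η ℓ t := by
  simp only [hedgeWeights, hedgePotential, sum_range_succ, mul_add, exp_add, div_mul_eq_mul_div,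
    sum_div]

lemma hedgeWeights_succ [Nonempty ι] (t : ℕ) (a : ι) :
    hedgeWeights η ℓ (t + 1) a =
      hedgeWeights η ℓ t a * exp (-η * ℓ t a) / ∑ k, hedgeWeights η ℓ t k * exp (-η * ℓ t k) := by
  have := (hedgePotential_pos η ℓ t).ne'
  rw [sum_hedgeWeights_mul_exp, hedgeWeights, hedgeWeights, sum_range_succ, mul_add, exp_add]
  field_simp

lemma eq_hedgeWeights [Nonempty ι] {w : ℕ → ι → ℝ} (hw0 : ∀ a, w 0 a = 1 / Fintype.card ι)
    (hwrec : ∀ t a, w (t + 1) a =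
      w t a * exp (-η * ℓ t a) / ∑ k, w t k * exp (-η * ℓ t k)) :
    w = hedgeWeights η ℓ := by
  ext t a
  induction t generalizing a with
  | zero => simp [hw0, hedgeWeights, hedgePotential_zero]
  | succ t ih => simp only [hwrec, hedgeWeights_succ, ih]

lemma log_hedgePotential_succ_le [Nonempty ι] (hℓ : ∀ t a, ℓ t a ∈ Set.Icc (0 : ℝ) 1) (t : ℕ) :
    log (hedgePotential η ℓ (t + 1)) ≤
      log (hedgePotential η ℓ t) - η * ∑ a, hedgeWeights η ℓ t a * ℓ t a + η ^ 2 / 8 := by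
  have hoeffding := log_sum_mul_exp_le (hedgeWeights_nonneg η ℓ t) (sum_hedgeWeights η ℓ t)
    (hℓ t) (-η)
  rw [sum_hedgeWeights_mul_exp, log_div (hedgePotential_pos η ℓ _).ne'
    (hedgePotential_pos η ℓ _).ne'] at hoeffding
  linarith

lemma log_hedgePotential_le [Nonempty ι] (hℓ : ∀ t a, ℓ t a ∈ Set.Icc (0 : ℝ) 1) (T : ℕ) :
    log (hedgePotential η ℓ T) ≤ log (Fintype.card ι) -
      η * ∑ t ∈ range T, ∑ a, hedgeWeights η ℓ t a * ℓ t a + T * η ^ 2 / 8 := by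
  induction T with
  | zero => simp [hedgePotential_zero]
  | succ T ih =>
    have := log_hedgePotential_succ_le η ℓ hℓ T
    rw [sum_range_succ]
    push_cast
    linarith

lemma neg_mul_sum_le_log_hedgePotential (T : ℕ) (a₀ : ι) :
    -η * ∑ t ∈ range T, ℓ t a₀ ≤ log (hedgePotential η ℓ T) := by
  rw [← log_exp (-η * _)]
  exact log_le_log (exp_pos _)
    (single_le_sum (f := fun a => exp (-η * ∑ t ∈ range T, ℓ t a)) (fun _ _ => (exp_pos _).le)
      (mem_univ a₀))

theorem hedge_regret_le [Nonempty ι] (hη : 0 < η) (hℓ : ∀ t a, ℓ t a ∈ Set.Icc (0 : ℝ) 1)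
    (T : ℕ) (a₀ : ι) :
    ∑ t ∈ range T, ∑ a, hedgeWeights η ℓ t a * ℓ t a ≤
      ∑ t ∈ range T, ℓ t a₀ + log (Fintype.card ι) / η + η * T / 8 := by
  have hupper := log_hedgePotential_le η ℓ hℓ T
  have hlower := neg_mul_sum_le_log_hedgePotential η ℓ T a₀
  refine le_of_mul_le_mul_left ?_ hη
  rw [mul_add, mul_add, mul_div_cancel₀ _ hη.ne']
  linarith

end Hedge

theorem stmt_5_general (K T : ℕ) (η : ℝ) (hη : 0 < η)
    (r : ℕ → Fin K → ℝ) (hr : ∀ t a, r t a ∈ Set.Icc (0 : ℝ) 1)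
    (w : ℕ → Fin K → ℝ)
    (hw0 : ∀ a, w 0 a = 1 / K)
    (hwrec : ∀ t a, w (t + 1) a =
      w t a * Real.exp (-η * (1 - r t a)) /
        ∑ k, w t k * Real.exp (-η * (1 - r t k)))
    (astar : Fin K) :
    ∑ t ∈ Finset.range T, r t astar - Real.log K / η - η * T / 8 ≤
      ∑ t ∈ Finset.range T, ∑ a, w t a * r t a := by
  have : Nonempty (Fin K) := ⟨astar⟩
  have hloss : ∀ t a, 1 - r t a ∈ Set.Icc (0 : ℝ) 1 := fun t a => by
    obtain ⟨h0, h1⟩ := hr t a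
    constructor <;> linarith
  have hw := eq_hedgeWeights η (fun t a => 1 - r t a) (by simpa using hw0) hwrec
  have hregret := hedge_regret_le η _ hη hloss T astar
  have hwsum : ∀ t, ∑ a, w t a = 1 := fun t => hw ▸ sum_hedgeWeights η _ t
  simp only [← hw, Fintype.card_fin, mul_sub, mul_one, sum_sub_distrib, hwsum, sum_const,
    card_range, nsmul_eq_mul] at hregret
  linarith

/-- Deterministic regret bound for the multiplicative weights (Hedge) algorithm with
rewards in `[0,1]`: starting from uniform weights and updating
`w_{t+1}(a) ∝ w_t(a)·exp(−η(1 − r_t(a)))`, for any fixed action `a*`,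
`∑_t ⟨w_t, r_t⟩ ≥ ∑_t r_t(a*) − (log K)/η − ηT/8`. -/
theorem stmt_5 (K T : ℕ) (hK : 1 ≤ K) (hT : 1 ≤ T) (η : ℝ) (hη : 0 < η)
    (r : ℕ → Fin K → ℝ) (hr : ∀ t a, r t a ∈ Set.Icc (0 : ℝ) 1)
    (w : ℕ → Fin K → ℝ)
    (hw0 : ∀ a, w 0 a = 1 / K)
    (hwrec : ∀ t a, w (t + 1) a =
      w t a * Real.exp (-η * (1 - r t a)) /
        ∑ k, w t k * Real.exp (-η * (1 - r t k)))
    (astar : Fin K) :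
    ∑ t ∈ Finset.range T, r t astar - Real.log K / η - η * T / 8 ≤
      ∑ t ∈ Finset.range T, ∑ a, w t a * r t a :=
  stmt_5_general K T η hη r hr w hw0 hwrec astar
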